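/- arXiv:2007.12863 — 5 statements merged into one kernel-verified Lean document; each statement's English description precedes it below -/
import Mathlib

section
/- For pairwise independent events E_1,...,E_m in a probability space, P(⋃_i E_i) ≥ (Σ_i P(E_i)) / (1 + Σ_i P(E_i)). -/
/-!
Second moment method. Let `N = ∑ i, 𝟙_{E i}` count the events that occur. Then `∫ N = S := ∑ i, μ (E i)`,
and pairwise independence gives `∫ N² = ∑ i, μ (E i) + ∑_{i ≠ j} μ (E i) μ (E j) ≤ S + S²`. Since `N`
vanishes off `U = ⋃ i, E i`, Cauchy–Schwarz applied to `N = N · 𝟙_U` gives `S² ≤ (∫ N²) μ U ≤ (S + S²) μ U`,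
which rearranges to `S / (1 + S) ≤ μ U`.
-/

open MeasureTheory ENNReal Finset

section

variable {Ω ι : Type*}

theorem support_sum_indicator_one_subset_iUnion (s : Finset ι) (E : ι → Set Ω) :
    Function.support (fun ω => ∑ i ∈ s, (E i).indicator (1 : Ω → ℝ≥0∞) ω) ⊆ ⋃ i, E i := by
  intro ω hω
  obtain ⟨i, -, hi⟩ := Finset.exists_ne_zero_of_sum_ne_zero hω
  exact Set.mem_iUnion.2 ⟨i, Set.mem_of_indicator_ne_zero hi⟩

variable [MeasurableSpace Ω] {μ : Measure Ω}

theorem sq_lintegral_le_lintegral_sq_mul_measure {f : Ω → ℝ≥0∞} (hf : AEMeasurable f μ)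
    {s : Set Ω} (hs : MeasurableSet s) (hfs : Function.support f ⊆ s) :
    (∫⁻ ω, f ω ∂μ) ^ 2 ≤ (∫⁻ ω, f ω ^ 2 ∂μ) * μ s := by
  have hf_eq : f * s.indicator 1 = f := by
    ext ω
    by_cases hω : ω ∈ s
    · simp [hω]
    · simp [hω, Function.notMem_support.1 fun h => hω (hfs h)]
  have h_ind : (fun ω => s.indicator (1 : Ω → ℝ≥0∞) ω ^ (2 : ℝ)) = s.indicator 1 := by
    ext ω
    by_cases hω : ω ∈ s <;> simp [hω]
  have hcs := lintegral_mul_le_Lp_mul_Lq μ Real.HolderConjugate.two_two hf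
    (measurable_one.indicator hs).aemeasurable
  rw [hf_eq, h_ind, lintegral_indicator_one hs] at hcs
  simp only [ENNReal.rpow_two] at hcs
  calc (∫⁻ ω, f ω ∂μ) ^ 2
      ≤ ((∫⁻ ω, f ω ^ 2 ∂μ) ^ (1 / 2 : ℝ) * μ s ^ (1 / 2 : ℝ)) ^ 2 := by gcongr
    _ = (∫⁻ ω, f ω ^ 2 ∂μ) * μ s := by
      rw [mul_pow, ← ENNReal.rpow_natCast, ← ENNReal.rpow_natCast (μ s ^ _), ← ENNReal.rpow_mul,
        ← ENNReal.rpow_mul]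
      norm_num

theorem lintegral_sum_indicator_one (s : Finset ι) {E : ι → Set Ω}
    (hE : ∀ i, MeasurableSet (E i)) :
    ∫⁻ ω, ∑ i ∈ s, (E i).indicator 1 ω ∂μ = ∑ i ∈ s, μ (E i) := by
  rw [lintegral_finsetSum s (f := fun i => (E i).indicator 1) fun i _ =>
    measurable_one.indicator (hE i)]
  simp only [lintegral_indicator_one (hE _)]

theorem lintegral_sq_sum_indicator_one (s : Finset ι) {E : ι → Set Ω}
    (hE : ∀ i, MeasurableSet (E i)) :
    ∫⁻ ω, (∑ i ∈ s, (E i).indicator 1 ω) ^ 2 ∂μ = ∑ i ∈ s, ∑ j ∈ s, μ (E i ∩ E j) := by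
  have h_sq : ∀ ω, (∑ i ∈ s, (E i).indicator (1 : Ω → ℝ≥0∞) ω) ^ 2 =
      ∑ p ∈ s ×ˢ s, (E p.1 ∩ E p.2).indicator 1 ω := fun ω => by
    rw [sq, sum_mul_sum, ← sum_product']
    simp only [Set.inter_indicator_one, Pi.mul_apply]
  simp only [h_sq]
  rw [lintegral_sum_indicator_one _ fun p : ι × ι => (hE p.1).inter (hE p.2)]
  exact sum_product _ _ _

theorem sum_sum_measure_inter_le_of_pairwise (s : Finset ι) {E : ι → Set Ω}
    (hE : Pairwise fun i j => μ (E i ∩ E j) = μ (E i) * μ (E j)) :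
    ∑ i ∈ s, ∑ j ∈ s, μ (E i ∩ E j) ≤ ∑ i ∈ s, μ (E i) + (∑ i ∈ s, μ (E i)) ^ 2 := by
  classical
  have h_row : ∀ i ∈ s, ∑ j ∈ s, μ (E i ∩ E j) ≤ μ (E i) + μ (E i) * ∑ j ∈ s, μ (E j) := by
    intro i hi
    rw [← add_sum_erase s _ hi, mul_sum]
    gcongr
    · exact Set.inter_subset_left
    · calc ∑ j ∈ s.erase i, μ (E i ∩ E j) = ∑ j ∈ s.erase i, μ (E i) * μ (E j) :=
            sum_congr rfl fun j hj => hE (ne_of_mem_erase hj).symm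
        _ ≤ ∑ j ∈ s, μ (E i) * μ (E j) := sum_le_sum_of_subset (erase_subset i s)
  calc ∑ i ∈ s, ∑ j ∈ s, μ (E i ∩ E j)
      ≤ ∑ i ∈ s, (μ (E i) + μ (E i) * ∑ j ∈ s, μ (E j)) := sum_le_sum h_row
    _ = ∑ i ∈ s, μ (E i) + (∑ i ∈ s, μ (E i)) ^ 2 := by rw [sum_add_distrib, ← sum_mul, sq]

theorem ENNReal.div_one_add_le_of_sq_le {a b : ℝ≥0∞} (h : a ^ 2 ≤ (a + a ^ 2) * b) :
    a / (1 + a) ≤ b := by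
  rcases eq_or_ne a 0 with rfl | ha0
  · simp
  rcases eq_or_ne a ⊤ with rfl | ha_top
  · simp -- `⊤ / ⊤ = 0` in `ℝ≥0∞`
  refine ENNReal.div_le_of_le_mul' ((ENNReal.mul_le_mul_iff_right ha0 ha_top).1 ?_)
  calc a * a = a ^ 2 := (sq a).symm
    _ ≤ (a + a ^ 2) * b := h
    _ = a * ((1 + a) * b) := by ring

end

theorem union_ge_sum_div_one_add_sum_general
    {Ω : Type*} [MeasurableSpace Ω] (μ : Measure Ω)
    (m : ℕ) (E : Fin m → Set Ω) (hmeas : ∀ i, MeasurableSet (E i))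
    (hpind : ∀ i j, i ≠ j → μ (E i ∩ E j) = μ (E i) * μ (E j)) :
    μ (⋃ i, E i) ≥ (∑ i, μ (E i)) / (1 + ∑ i, μ (E i)) := by
  have h_count : AEMeasurable (fun ω => ∑ i, (E i).indicator (1 : Ω → ℝ≥0∞) ω) μ :=
    (Finset.measurable_sum _ fun i _ => measurable_one.indicator (hmeas i)).aemeasurable
  have h_second_moment := sq_lintegral_le_lintegral_sq_mul_measure h_count
    (MeasurableSet.iUnion hmeas) (support_sum_indicator_one_subset_iUnion _ E)
  rw [lintegral_sum_indicator_one _ hmeas, lintegral_sq_sum_indicator_one _ hmeas] at h_second_moment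
  exact ENNReal.div_one_add_le_of_sq_le <| h_second_moment.trans <|
    mul_le_mul_left (sum_sum_measure_inter_le_of_pairwise _ fun i j => hpind i j) _

theorem union_ge_sum_div_one_add_sum
    {Ω : Type*} [MeasurableSpace Ω] (μ : Measure Ω) [IsProbabilityMeasure μ]
    (m : ℕ) (E : Fin m → Set Ω) (hmeas : ∀ i, MeasurableSet (E i))
    (hpind : ∀ i j, i ≠ j → μ (E i ∩ E j) = μ (E i) * μ (E j)) :
    μ (⋃ i, E i) ≥ (∑ i, μ (E i)) / (1 + ∑ i, μ (E i)) :=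
  union_ge_sum_div_one_add_sum_general μ m E hmeas hpind
end

section
/- De Caen's bound: for any finite collection of events E_1,...,E_m with positive probabilities, P(⋃_i E_i) ≥ Σ_i P(E_i)²/(Σ_j P(E_i ∩ E_j)). -/
/-!
Let `N = coverCount E` count the events containing a point. On `E i`, Cauchy–Schwarz for `√N` and `1/√N` gives
`μ (E i) ^ 2 ≤ (∫_{E i} N) * (∫_{E i} 1/N)`. Here `∫_{E i} N = ∑ j, μ (E i ∩ E j)`, and
`∑ i, ∫_{E i} 1/N = μ (⋃ i, E i)` because `∑ i, 1_{E i} / N = 1_{⋃ i, E i}`.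
-/

open MeasureTheory ENNReal

section CoverCount

variable {ι Ω : Type*} [Fintype ι] {E : ι → Set Ω}

noncomputable def coverCount (E : ι → Set Ω) (ω : Ω) : ℝ≥0∞ :=
  ∑ i, (E i).indicator 1 ω

theorem coverCount_ne_top (ω : Ω) : coverCount E ω ≠ ∞ :=
  ENNReal.sum_ne_top.2 fun i _ => by by_cases hω : ω ∈ E i <;> simp [hω]

theorem coverCount_ne_zero {i : ι} {ω : Ω} (hω : ω ∈ E i) : coverCount E ω ≠ 0 := by
  refine (zero_lt_one.trans_le ?_).ne'
  simpa [coverCount, Set.indicator_of_mem hω] using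
    Finset.single_le_sum (f := fun j => (E j).indicator (1 : Ω → ℝ≥0∞) ω)
      (fun j _ => zero_le) (Finset.mem_univ i)

theorem coverCount_mul_inv (ω : Ω) :
    coverCount E ω * (coverCount E ω)⁻¹ = (⋃ i, E i).indicator 1 ω := by
  by_cases hω : ω ∈ ⋃ i, E i
  · obtain ⟨i, hi⟩ := Set.mem_iUnion.1 hω
    rw [ENNReal.mul_inv_cancel (coverCount_ne_zero hi) (coverCount_ne_top ω),
      Set.indicator_of_mem hω, Pi.one_apply]
  · have hzero : coverCount E ω = 0 := Finset.sum_eq_zero fun i _ =>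
      Set.indicator_of_notMem (fun hi => hω (Set.mem_iUnion.2 ⟨i, hi⟩)) _
    rw [hzero, zero_mul, Set.indicator_of_notMem hω]

variable [MeasurableSpace Ω]

theorem measurable_coverCount (hE : ∀ i, MeasurableSet (E i)) : Measurable (coverCount E) :=
  Finset.measurable_sum _ fun i _ => measurable_const.indicator (hE i)

variable (μ : Measure Ω)

theorem sum_setLIntegral_eq_lintegral_coverCount_mul (hE : ∀ i, MeasurableSet (E i))
    {g : Ω → ℝ≥0∞} (hg : Measurable g) :
    ∑ i, ∫⁻ ω in E i, g ω ∂μ = ∫⁻ ω, coverCount E ω * g ω ∂μ := by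
  simp only [coverCount, Finset.sum_mul]
  rw [lintegral_finsetSum (f := fun i ω => (E i).indicator 1 ω * g ω) _
    fun i _ => (measurable_const.indicator (hE i)).mul hg]
  refine Finset.sum_congr rfl fun i _ => ?_
  rw [← lintegral_indicator (hE i)]
  congr 1
  ext ω
  by_cases hω : ω ∈ E i <;> simp [hω]

theorem setLIntegral_coverCount (hE : ∀ i, MeasurableSet (E i)) (i : ι) :
    ∫⁻ ω in E i, coverCount E ω ∂μ = ∑ j, μ (E i ∩ E j) := by
  simp only [coverCount]
  rw [lintegral_finsetSum (f := fun j => (E j).indicator 1) _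
    fun j _ => measurable_const.indicator (hE j)]
  refine Finset.sum_congr rfl fun j _ => ?_
  rw [lintegral_indicator_one (hE j), Measure.restrict_apply (hE j), Set.inter_comm]

theorem sum_setLIntegral_inv_coverCount (hE : ∀ i, MeasurableSet (E i)) :
    ∑ i, ∫⁻ ω in E i, (coverCount E ω)⁻¹ ∂μ = μ (⋃ i, E i) := by
  rw [sum_setLIntegral_eq_lintegral_coverCount_mul μ hE (g := fun ω => (coverCount E ω)⁻¹)
    (measurable_coverCount hE).inv]
  simp only [coverCount_mul_inv]
  exact lintegral_indicator_one (MeasurableSet.iUnion hE)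

end CoverCount

theorem measure_univ_sq_le_lintegral_mul_lintegral_inv {α : Type*} [MeasurableSpace α]
    {ν : Measure α} {f : α → ℝ≥0∞} (hf : AEMeasurable f ν)
    (hf_pos : ∀ᵐ x ∂ν, f x ≠ 0) (hf_fin : ∀ᵐ x ∂ν, f x ≠ ∞) :
    ν Set.univ ^ 2 ≤ (∫⁻ x, f x ∂ν) * ∫⁻ x, (f x)⁻¹ ∂ν := by
  have hone : ∫⁻ x, f x ^ (1 / 2 : ℝ) * (f x)⁻¹ ^ (1 / 2 : ℝ) ∂ν = ν Set.univ := by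
    rw [← lintegral_one]
    refine lintegral_congr_ae ?_
    filter_upwards [hf_pos, hf_fin] with x hx0 hxt
    rw [← ENNReal.mul_rpow_of_nonneg _ _ (by norm_num), ENNReal.mul_inv_cancel hx0 hxt,
      ENNReal.one_rpow]
  have holder := lintegral_mul_norm_pow_le hf hf.inv (p := 1 / 2) (q := 1 / 2)
    (by norm_num) (by norm_num) (by norm_num)
  simp only [Pi.inv_apply] at holder
  rw [hone] at holder
  calc ν Set.univ ^ 2
      ≤ ((∫⁻ x, f x ∂ν) ^ (1 / 2 : ℝ) * (∫⁻ x, (f x)⁻¹ ∂ν) ^ (1 / 2 : ℝ)) ^ 2 :=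
        pow_le_pow_left₀ zero_le holder 2
    _ = (∫⁻ x, f x ∂ν) * ∫⁻ x, (f x)⁻¹ ∂ν := by
        rw [mul_pow, ← ENNReal.rpow_natCast, ← ENNReal.rpow_natCast, ← ENNReal.rpow_mul,
          ← ENNReal.rpow_mul]
        norm_num

theorem sq_measure_le_setLIntegral_coverCount_mul {Ω ι : Type*} [MeasurableSpace Ω]
    [Fintype ι] (μ : Measure Ω) {E : ι → Set Ω} (hE : ∀ i, MeasurableSet (E i)) (i : ι) :
    μ (E i) ^ 2 ≤ (∫⁻ ω in E i, coverCount E ω ∂μ) * ∫⁻ ω in E i, (coverCount E ω)⁻¹ ∂μ := by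
  rw [← Measure.restrict_apply_univ]
  exact measure_univ_sq_le_lintegral_mul_lintegral_inv
    (measurable_coverCount hE).aemeasurable
    (ae_restrict_of_forall_mem (hE i) fun _ => coverCount_ne_zero)
    (ae_of_all _ coverCount_ne_top)

theorem deCaen_bound_general
    {Ω : Type*} [MeasurableSpace Ω] (μ : Measure Ω)
    (m : ℕ) (E : Fin m → Set Ω) (hmeas : ∀ i, MeasurableSet (E i)) :
    μ (⋃ i, E i) ≥ ∑ i, (μ (E i)) ^ 2 / (∑ j, μ (E i ∩ E j)) := by
  rw [ge_iff_le, ← sum_setLIntegral_inv_coverCount μ hmeas]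
  refine Finset.sum_le_sum fun i _ => ?_
  rw [← setLIntegral_coverCount μ hmeas]
  exact ENNReal.div_le_of_le_mul' (sq_measure_le_setLIntegral_coverCount_mul μ hmeas i)

theorem deCaen_bound
    {Ω : Type*} [MeasurableSpace Ω] (μ : Measure Ω) [IsProbabilityMeasure μ]
    (m : ℕ) (E : Fin m → Set Ω) (hmeas : ∀ i, MeasurableSet (E i))
    (hpos : ∀ i, 0 < μ (E i)) :
    μ (⋃ i, E i) ≥ ∑ i, (μ (E i)) ^ 2 / (∑ j, μ (E i ∩ E j)) :=
  deCaen_bound_general μ m E hmeas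
end

section
/- For a probability distribution P on a finite alphabet, min over distributions Q of [D(Q‖P) − ρ·H(Q)] equals −(1+ρ)·log(Σ_x P(x)^{1/(1+ρ)}), for any ρ ≥ 0. -/
/-!
Writing `c = 1 + ρ` and `T x = P x ^ (1 / c) / Z` with `Z = ∑ x, P x ^ (1 / c)`, one has
`log (Q / P) + ρ log Q = c log (Q / T) - c log Z` pointwise, so the objective equals
`c · D(Q‖T) - c log Z`. Gibbs' inequality `D(Q‖T) ≥ 0`, with equality at `Q = T`, gives the minimum.
-/

open Real Finset

lemma sub_le_mul_log_div {p q : ℝ} (hp : 0 < p) (hq : 0 ≤ q) : q - p ≤ q * log (q / p) := by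
  have h := mul_le_mul_of_nonneg_left (self_sub_one_le_mul_log (div_nonneg hq hp.le)) hp.le
  calc q - p = p * (q / p - 1) := by field_simp
    _ ≤ p * (q / p * log (q / p)) := h
    _ = q * log (q / p) := by field_simp

theorem sum_mul_log_div_nonneg {ι : Type*} {s : Finset ι} {p q : ι → ℝ}
    (hp : ∀ i ∈ s, 0 < p i) (hq : ∀ i ∈ s, 0 ≤ q i) (hpq : ∑ i ∈ s, p i ≤ ∑ i ∈ s, q i) :
    0 ≤ ∑ i ∈ s, q i * log (q i / p i) :=
  calc 0 ≤ ∑ i ∈ s, (q i - p i) := by rw [sum_sub_distrib]; linarith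
    _ ≤ ∑ i ∈ s, q i * log (q i / p i) :=
      sum_le_sum fun i hi ↦ sub_le_mul_log_div (hp i hi) (hq i hi)

lemma mul_log_div_tilted {ρ p q Z : ℝ} (hρ : 1 + ρ ≠ 0) (hp : 0 < p) (hZ : 0 < Z) :
    (1 + ρ) * (q * log (q / (p ^ (1 / (1 + ρ)) / Z))) =
      q * log (q / p) + ρ * (q * log q) + (1 + ρ) * log Z * q := by
  rcases eq_or_ne q 0 with rfl | hq
  · simp
  rw [log_div hq (by positivity), log_div (by positivity) hZ.ne', log_rpow hp,
    log_div hq hp.ne']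
  field_simp
  ring

section Tilted

variable {X : Type*} [Fintype X] [Nonempty X] {P : X → ℝ}

noncomputable def tilted (P : X → ℝ) (s : ℝ) (x : X) : ℝ := P x ^ s / ∑ y, P y ^ s

lemma sum_rpow_pos (hP : ∀ x, 0 < P x) (s : ℝ) : 0 < ∑ x, P x ^ s :=
  sum_pos (fun x _ ↦ rpow_pos_of_pos (hP x) s) univ_nonempty

lemma tilted_pos (hP : ∀ x, 0 < P x) (s : ℝ) (x : X) : 0 < tilted P s x :=
  div_pos (rpow_pos_of_pos (hP x) s) (sum_rpow_pos hP s)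

lemma sum_tilted (hP : ∀ x, 0 < P x) (s : ℝ) : ∑ x, tilted P s x = 1 := by
  simp only [tilted, ← sum_div, div_self (sum_rpow_pos hP s).ne']

lemma kl_sub_mul_entropy_eq (hP : ∀ x, 0 < P x) {ρ : ℝ} (hρ : 1 + ρ ≠ 0) {Q : X → ℝ}
    (hQ : ∑ x, Q x = 1) :
    (∑ x, Q x * log (Q x / P x)) - ρ * (-∑ x, Q x * log (Q x)) =
      (1 + ρ) * ∑ x, Q x * log (Q x / tilted P (1 / (1 + ρ)) x) -
        (1 + ρ) * log (∑ x, P x ^ (1 / (1 + ρ))) := by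
  unfold tilted
  rw [mul_sum, sum_congr rfl fun x _ ↦ mul_log_div_tilted hρ (hP x) (sum_rpow_pos hP _),
    sum_add_distrib, sum_add_distrib, ← mul_sum, ← mul_sum, hQ]
  ring

end Tilted

theorem min_kl_minus_rho_entropy_general {X : Type*} [Fintype X] [Nonempty X]
    (P : X → ℝ) (hP0 : ∀ x, 0 < P x) (ρ : ℝ) (hρ : 0 ≤ ρ) :
    IsLeast
      {v : ℝ | ∃ Q : X → ℝ, (∀ x, 0 ≤ Q x) ∧ (∑ x, Q x = 1) ∧
        v = (∑ x, Q x * Real.log (Q x / P x)) - ρ * (-∑ x, Q x * Real.log (Q x))}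
      (-(1 + ρ) * Real.log (∑ x, P x ^ (1 / (1 + ρ)))) := by
  have hc : 0 < 1 + ρ := by linarith
  set T := tilted P (1 / (1 + ρ))
  have hT : ∑ x, T x = 1 := sum_tilted hP0 _
  have hT0 : ∀ x, 0 < T x := tilted_pos hP0 _
  constructor
  · refine ⟨T, fun x ↦ (hT0 x).le, hT, ?_⟩
    have hself : ∑ x, T x * log (T x / T x) = 0 :=
      sum_eq_zero fun x _ ↦ by rw [div_self (hT0 x).ne', log_one, mul_zero]
    rw [kl_sub_mul_entropy_eq hP0 hc.ne' hT, hself]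
    ring
  · rintro _ ⟨Q, hQ0, hQ1, rfl⟩
    rw [kl_sub_mul_entropy_eq hP0 hc.ne' hQ1]
    have hgibbs : 0 ≤ ∑ x, Q x * log (Q x / T x) :=
      sum_mul_log_div_nonneg (fun x _ ↦ hT0 x) (fun x _ ↦ hQ0 x) (by rw [hT, hQ1])
    linarith [mul_nonneg hc.le hgibbs]

theorem min_kl_minus_rho_entropy {X : Type*} [Fintype X] [Nonempty X]
    (P : X → ℝ) (hP0 : ∀ x, 0 < P x) (hP1 : ∑ x, P x = 1) (ρ : ℝ) (hρ : 0 ≤ ρ) :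
    IsLeast
      {v : ℝ | ∃ Q : X → ℝ, (∀ x, 0 ≤ Q x) ∧ (∑ x, Q x = 1) ∧
        v = (∑ x, Q x * Real.log (Q x / P x)) - ρ * (-∑ x, Q x * Real.log (Q x))}
      (-(1 + ρ) * Real.log (∑ x, P x ^ (1 / (1 + ρ)))) :=
  min_kl_minus_rho_entropy_general P hP0 ρ hρ
end

section
/- The minimizer in min_Q [D(Q‖P) − ρ·H(Q)] over probability distributions Q on a finite alphabet is the tilted distribution Q*(x) = P(x)^{1/(1+ρ)} / Σ_{x'} P(x')^{1/(1+ρ)}, for ρ ≥ 0. -/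
/-!
Since `log P = (1 + ρ) (log Q* + log Z)` with `Z = ∑ P^{1/(1+ρ)}`, the objective equals
`(1 + ρ) (D(Q‖Q*) - log Z)` for every distribution `Q`, so it is minimised exactly where the
divergence from `Q*` vanishes; Gibbs' inequality `D(Q‖Q*) ≥ 0` finishes the argument.
-/

open Real Finset InformationTheory

section RelEntropy

variable {X : Type*} [Fintype X]

noncomputable def relEntropy (Q P : X → ℝ) : ℝ := ∑ x, Q x * log (Q x / P x)

noncomputable def shannonEntropy (Q : X → ℝ) : ℝ := -∑ x, Q x * log (Q x)

theorem relEntropy_self {Q : X → ℝ} : relEntropy Q Q = 0 := by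
  simp [relEntropy]

/-- Gibbs' inequality: `q log (q / r) = r · klFun (q / r) + (q - r)` and `klFun ≥ 0`. -/
theorem relEntropy_nonneg {Q R : X → ℝ} (hQ : ∀ x, 0 ≤ Q x) (hR : ∀ x, 0 < R x)
    (hsum : ∑ x, R x ≤ ∑ x, Q x) : 0 ≤ relEntropy Q R := by
  have hterm : ∀ x ∈ univ, Q x * log (Q x / R x) = R x * klFun (Q x / R x) + (Q x - R x) := by
    intro x _
    have := (hR x).ne'
    rw [klFun_apply]
    field_simp
    ring
  have hkl : 0 ≤ ∑ x, R x * klFun (Q x / R x) :=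
    sum_nonneg fun x _ => mul_nonneg (hR x).le (klFun_nonneg (div_nonneg (hQ x) (hR x).le))
  rw [relEntropy, sum_congr rfl hterm, sum_add_distrib, sum_sub_distrib]
  linarith

theorem relEntropy_sub_mul_shannonEntropy_eq {P Q R : X → ℝ} {ρ c : ℝ}
    (hP : ∀ x, P x ≠ 0) (hR : ∀ x, R x ≠ 0) (hlog : ∀ x, log (P x) = (1 + ρ) * (log (R x) + c))
    (hQ : ∑ x, Q x = 1) :
    relEntropy Q P - ρ * shannonEntropy Q = (1 + ρ) * (relEntropy Q R - c) := by
  have hterm : ∀ x ∈ univ, Q x * log (Q x / P x) + ρ * (Q x * log (Q x))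
      = (1 + ρ) * (Q x * log (Q x / R x)) - (1 + ρ) * c * Q x := by
    intro x _
    rcases eq_or_ne (Q x) 0 with h | h
    · simp [h]
    · rw [log_div h (hP x), log_div h (hR x), hlog x]
      ring
  have hsum := sum_congr rfl hterm
  rw [sum_add_distrib, sum_sub_distrib, ← mul_sum, ← mul_sum, ← mul_sum, hQ] at hsum
  rw [relEntropy, relEntropy, shannonEntropy]
  linarith

end RelEntropy

theorem log_eq_mul_log_rpow_div_add_log {p Z ρ : ℝ} (hp : 0 < p) (hZ : 0 < Z) (hρ : 1 + ρ ≠ 0) :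
    log p = (1 + ρ) * (log (p ^ (1 / (1 + ρ)) / Z) + log Z) := by
  rw [log_div (rpow_pos_of_pos hp _).ne' hZ.ne', log_rpow hp]
  field_simp
  ring

theorem tilted_is_minimizer_general {X : Type*} [Fintype X]
    (P : X → ℝ) (hP0 : ∀ x, 0 < P x) (ρ : ℝ) (hρ : 0 ≤ ρ)
    (Qstar : X → ℝ)
    (hQstar : ∀ x, Qstar x = P x ^ (1 / (1 + ρ)) / ∑ x', P x' ^ (1 / (1 + ρ))) :
    ∀ Q : X → ℝ, (∀ x, 0 ≤ Q x) → (∑ x, Q x = 1) →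
      (∑ x, Qstar x * Real.log (Qstar x / P x)) - ρ * (-∑ x, Qstar x * Real.log (Qstar x)) ≤
      (∑ x, Q x * Real.log (Q x / P x)) - ρ * (-∑ x, Q x * Real.log (Q x)) := by
  intro Q hQ0 hQ1
  set Z := ∑ x', P x' ^ (1 / (1 + ρ))
  obtain ⟨x₀, -, -⟩ := exists_ne_zero_of_sum_ne_zero (hQ1 ▸ one_ne_zero : ∑ x, Q x ≠ 0)
  have hZ : 0 < Z := sum_pos (fun x _ => rpow_pos_of_pos (hP0 x) _) ⟨x₀, mem_univ x₀⟩
  have hQstar_pos : ∀ x, 0 < Qstar x := fun x => hQstar x ▸ div_pos (rpow_pos_of_pos (hP0 x) _) hZ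
  have hQstar_sum : ∑ x, Qstar x = 1 := by
    simp only [hQstar]
    rw [← sum_div, div_self hZ.ne']
  have hlog : ∀ x, log (P x) = (1 + ρ) * (log (Qstar x) + log Z) := fun x => by
    rw [hQstar x]
    exact log_eq_mul_log_rpow_div_add_log (hP0 x) hZ (by linarith)
  have hP : ∀ x, P x ≠ 0 := fun x => (hP0 x).ne'
  have hQstar_ne : ∀ x, Qstar x ≠ 0 := fun x => (hQstar_pos x).ne'
  change relEntropy Qstar P - ρ * shannonEntropy Qstar ≤ relEntropy Q P - ρ * shannonEntropy Q
  rw [relEntropy_sub_mul_shannonEntropy_eq hP hQstar_ne hlog hQ1,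
    relEntropy_sub_mul_shannonEntropy_eq hP hQstar_ne hlog hQstar_sum, relEntropy_self]
  have hgibbs := relEntropy_nonneg hQ0 hQstar_pos (hQstar_sum.trans hQ1.symm).le
  gcongr

theorem tilted_is_minimizer {X : Type*} [Fintype X] [Nonempty X]
    (P : X → ℝ) (hP0 : ∀ x, 0 < P x) (hP1 : ∑ x, P x = 1) (ρ : ℝ) (hρ : 0 ≤ ρ)
    (Qstar : X → ℝ)
    (hQstar : ∀ x, Qstar x = P x ^ (1 / (1 + ρ)) / ∑ x', P x' ^ (1 / (1 + ρ))) :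
    ∀ Q : X → ℝ, (∀ x, 0 ≤ Q x) → (∑ x, Q x = 1) →
      (∑ x, Qstar x * Real.log (Qstar x / P x)) - ρ * (-∑ x, Qstar x * Real.log (Qstar x)) ≤
      (∑ x, Q x * Real.log (Q x / P x)) - ρ * (-∑ x, Q x * Real.log (Q x)) :=
  tilted_is_minimizer_general P hP0 ρ hρ Qstar hQstar
end

section
/- The number of elements in a type class of sequences of length n over a finite alphabet with empirical distribution P̂ satisfies |T(P̂)| ≤ 2^{n·H(P̂)}, where H(P̂) is the Shannon entropy (base 2) of the empirical distribution. -/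
/-!
Put the empirical distribution `p x = cnt x / n` on the alphabet. Under the i.i.d. law `pⁿ` every
sequence of type `cnt` has the same probability `∏ x, p x ^ cnt x = 2 ^ (-n H(p))`, and the
probabilities of all sequences sum to `1`; hence `|T(p)| · 2 ^ (-n H(p)) ≤ 1`.
-/

open Finset Real

namespace InformationTheory

section TypeClass

variable {ι X : Type*} [Fintype ι] [Fintype X] [DecidableEq X]

theorem prod_comp_eq_prod_pow_card_fiber {M : Type*} [CommMonoid M] (f : X → M) (s : ι → X) :
    ∏ i, f (s i) = ∏ x, f x ^ #{i | s i = x} := by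
  rw [← prod_fiberwise' univ s f]
  exact prod_congr rfl fun x _ => prod_const _

variable [DecidableEq ι]

variable (ι) in
/-- The type class `T(P̂)` of the empirical distribution `P̂ x = cnt x / card ι`. -/
def typeClass (cnt : X → ℕ) : Finset (ι → X) :=
  univ.filter fun s => ∀ x, #{i | s i = x} = cnt x

theorem mem_typeClass {cnt : X → ℕ} {s : ι → X} :
    s ∈ typeClass ι cnt ↔ ∀ x, #{i | s i = x} = cnt x := by
  simp [typeClass]

theorem prod_comp_of_mem_typeClass {M : Type*} [CommMonoid M] (f : X → M) {cnt : X → ℕ}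
    {s : ι → X} (hs : s ∈ typeClass ι cnt) : ∏ i, f (s i) = ∏ x, f x ^ cnt x := by
  rw [prod_comp_eq_prod_pow_card_fiber]
  exact prod_congr rfl fun x _ => by rw [mem_typeClass.mp hs x]

theorem card_typeClass_mul_prod_pow_le_one (cnt : X → ℕ) {p : X → ℝ} (hp : ∀ x, 0 ≤ p x)
    (hp_sum : ∑ x, p x ≤ 1) : #(typeClass ι cnt) * ∏ x, p x ^ cnt x ≤ 1 := by
  calc (#(typeClass ι cnt) : ℝ) * ∏ x, p x ^ cnt x
      = ∑ s ∈ typeClass ι cnt, ∏ i, p (s i) := by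
        rw [sum_congr rfl fun s hs => prod_comp_of_mem_typeClass p hs, sum_const, nsmul_eq_mul]
    _ ≤ ∑ s : ι → X, ∏ i, p (s i) :=
        sum_le_sum_of_subset_of_nonneg (subset_univ _) fun s _ _ =>
          prod_nonneg fun i _ => hp (s i)
    _ = ∏ _i : ι, ∑ x, p x := (Fintype.prod_sum _).symm
    _ ≤ 1 := prod_le_one (fun _ _ => sum_nonneg fun x _ => hp x) fun _ _ => hp_sum

end TypeClass

theorem natCast_mul_div_cancel_of_le {c n : ℕ} (hcn : c ≤ n) : (n : ℝ) * (c / n) = c := by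
  rcases Nat.eq_zero_or_pos n with rfl | hn
  · simp [Nat.le_zero.mp hcn]
  · field_simp

theorem two_rpow_mul_logb_div {c n : ℕ} (hcn : c ≤ n) :
    (2 : ℝ) ^ (c * logb 2 (c / n)) = ((c : ℝ) / n) ^ c := by
  rcases Nat.eq_zero_or_pos c with rfl | hc
  · simp
  have hpos : (0 : ℝ) < c / n := by
    have : 0 < n := hc.trans_le hcn
    positivity
  rw [mul_comm, rpow_mul zero_le_two, rpow_logb zero_lt_two one_lt_two.ne' hpos, rpow_natCast]

theorem two_rpow_mul_entropy_eq_inv_prod {X : Type*} [Fintype X] {n : ℕ} {cnt : X → ℕ}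
    (hcnt : ∑ x, cnt x = n) :
    (2 : ℝ) ^ ((n : ℝ) * (-∑ x, ((cnt x : ℝ) / n) * logb 2 ((cnt x : ℝ) / n))) =
      (∏ x, ((cnt x : ℝ) / n) ^ cnt x)⁻¹ := by
  have hle (x : X) : cnt x ≤ n := hcnt ▸ single_le_sum (fun _ _ => Nat.zero_le _) (mem_univ x)
  have hexp : (n : ℝ) * (-∑ x, ((cnt x : ℝ) / n) * logb 2 ((cnt x : ℝ) / n)) =
      -∑ x, (cnt x : ℝ) * logb 2 ((cnt x : ℝ) / n) := by
    rw [mul_neg, mul_sum]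
    refine congrArg _ (sum_congr rfl fun x _ => ?_)
    rw [← mul_assoc, natCast_mul_div_cancel_of_le (hle x)]
  rw [hexp, rpow_neg zero_le_two, rpow_sum_of_pos zero_lt_two]
  exact congrArg _ (prod_congr rfl fun x _ => two_rpow_mul_logb_div (hle x))

end InformationTheory

open InformationTheory in
theorem type_class_card_le_general {X : Type*} [Fintype X] [DecidableEq X]
    (n : ℕ) (cnt : X → ℕ) (hcnt : ∑ x, cnt x = n) :
    ((Finset.univ.filter (fun s : Fin n → X =>
        ∀ x, (Finset.univ.filter (fun i => s i = x)).card = cnt x)).card : ℝ) ≤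
      2 ^ ((n : ℝ) * (-∑ x, ((cnt x : ℝ) / n) * Real.logb 2 ((cnt x : ℝ) / n))) := by
  set p : X → ℝ := fun x => (cnt x : ℝ) / n
  have hp_sum : ∑ x, p x ≤ 1 := by
    rw [← sum_div, ← Nat.cast_sum, hcnt]
    exact div_self_le_one _
  have hbound : #(typeClass (Fin n) cnt) * ∏ x, p x ^ cnt x ≤ 1 :=
    card_typeClass_mul_prod_pow_le_one cnt (fun x => by positivity) hp_sum
  have hrhs := two_rpow_mul_entropy_eq_inv_prod hcnt
  have hprod_pos : 0 < ∏ x, p x ^ cnt x := inv_pos.mp (hrhs ▸ rpow_pos_of_pos zero_lt_two _)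
  rw [hrhs, ← one_div]
  exact (le_div_iff₀ hprod_pos).mpr hbound

theorem type_class_card_le {X : Type*} [Fintype X] [DecidableEq X]
    (n : ℕ) (hn : 0 < n) (cnt : X → ℕ) (hcnt : ∑ x, cnt x = n) :
    ((Finset.univ.filter (fun s : Fin n → X =>
        ∀ x, (Finset.univ.filter (fun i => s i = x)).card = cnt x)).card : ℝ) ≤
      2 ^ ((n : ℝ) * (-∑ x, ((cnt x : ℝ) / n) * Real.logb 2 ((cnt x : ℝ) / n))) :=
  type_class_card_le_general n cnt hcnt
end
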